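/- Let A, B, X ∈ B(H) and φ an Orlicz function. Then φ(w(A*XB)) ≤ (1/2)·w(φ(‖X‖·|A|²) + φ(‖X‖·|B|²)). -/

import Mathlib

/-- An Orlicz function: convex, continuous, non-decreasing on `[0, ∞)`,
vanishing at `0`, positive on `(0, ∞)`, and tending to infinity. -/
def IsOrliczFunction (φ : ℝ → ℝ) : Prop :=
  ConvexOn ℝ (Set.Ici 0) φ ∧ ContinuousOn φ (Set.Ici 0) ∧ MonotoneOn φ (Set.Ici 0) ∧
    φ 0 = 0 ∧ (∀ u : ℝ, 0 < u → 0 < φ u) ∧ Filter.Tendsto φ Filter.atTop Filter.atTop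

/-- The numerical radius of a bounded operator on a complex Hilbert space. -/
noncomputable def numRad {H : Type*} [NormedAddCommGroup H] [InnerProductSpace ℂ H]
    (A : H →L[ℂ] H) : ℝ :=
  ⨆ x : {x : H // ‖x‖ = 1}, ‖(inner ℂ (A x.1) x.1 : ℂ)‖

/-- The modulus `|A| = (A*A)^{1/2}`, via continuous functional calculus. -/
noncomputable def absOp {H : Type*} [NormedAddCommGroup H] [InnerProductSpace ℂ H]
    [CompleteSpace H] (A : H →L[ℂ] H) : H →L[ℂ] H :=
  cfc Real.sqrt (ContinuousLinearMap.adjoint A * A)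

/-!
With `S₁ = ‖X‖ • A†A` and `S₂ = ‖X‖ • B†B`, whose quadratic forms are `‖X‖ ‖A x‖²` and
`‖X‖ ‖B x‖²`, Cauchy–Schwarz and AM–GM give, for a unit vector `x`,
`|⟪A† X B x, x⟫| ≤ ‖X‖ ‖A x‖ ‖B x‖ ≤ (⟪S₁ x, x⟫ + ⟪S₂ x, x⟫) / 2`.
Apply the monotone `φ`, midpoint convexity, and Jensen's inequality for the vector state,
`φ ⟪S x, x⟫ ≤ ⟪φ(S) x, x⟫` for `S ≥ 0`, which follows by comparing `φ` with a supporting line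
at `⟪S x, x⟫` on the spectrum of `S`. Continuity of `φ` passes the bound to the supremum.
-/

open ContinuousLinearMap Set
open scoped InnerProductSpace

theorem ConvexOn.add_rightDeriv_mul_sub_le {f : ℝ → ℝ} {S : Set ℝ} (hf : ConvexOn ℝ S f)
    {t y : ℝ} (ht : t ∈ interior S) (hy : y ∈ S) :
    f t + derivWithin f (Ioi t) t * (y - t) ≤ f y := by
  rcases lt_trichotomy y t with hyt | rfl | hty
  · have h := (hf.slope_le_leftDeriv_of_mem_interior hy ht hyt).trans
      (hf.leftDeriv_le_rightDeriv_of_mem_interior ht)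
    rw [slope_def_field, div_le_iff₀ (sub_pos.2 hyt)] at h
    linarith
  · simp
  · have h := hf.rightDeriv_le_slope_of_mem_interior ht hy hty
    rw [slope_def_field, le_div_iff₀ (sub_pos.2 hty)] at h
    linarith

/-- At the endpoint `0` a supporting line need not exist for a general convex function;
monotonicity provides the horizontal one. -/
theorem ConvexOn.exists_forall_add_mul_sub_le_of_monotoneOn {f : ℝ → ℝ}
    (hf : ConvexOn ℝ (Ici 0) f) (hmono : MonotoneOn f (Ici 0)) {t : ℝ} (ht : 0 ≤ t) :
    ∃ a, ∀ s, 0 ≤ s → f t + a * (s - t) ≤ f s := by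
  rcases ht.eq_or_lt with rfl | ht
  · exact ⟨0, fun s hs => by simpa using hmono self_mem_Ici hs hs⟩
  · exact ⟨_, fun s hs => hf.add_rightDeriv_mul_sub_le (by simpa using ht) hs⟩

section

variable {H : Type*} [NormedAddCommGroup H] [InnerProductSpace ℂ H]

theorem numRad_bddAbove (T : H →L[ℂ] H) :
    BddAbove (range fun x : {x : H // ‖x‖ = 1} => ‖⟪T x, x⟫_ℂ‖) := by
  refine ⟨‖T‖, ?_⟩
  rintro _ ⟨⟨x, hx⟩, rfl⟩
  calc ‖⟪T x, x⟫_ℂ‖ ≤ ‖T x‖ * ‖x‖ := norm_inner_le_norm _ _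
    _ ≤ ‖T‖ * ‖x‖ * ‖x‖ := by gcongr; exact T.le_opNorm x
    _ = ‖T‖ := by rw [hx, mul_one, mul_one]

theorem norm_inner_le_numRad (T : H →L[ℂ] H) {x : H} (hx : ‖x‖ = 1) :
    ‖⟪T x, x⟫_ℂ‖ ≤ numRad T :=
  le_ciSup (numRad_bddAbove T) ⟨x, hx⟩

theorem numRad_of_subsingleton [Subsingleton H] (T : H →L[ℂ] H) : numRad T = 0 := by
  have : IsEmpty {x : H // ‖x‖ = 1} := ⟨fun ⟨x, hx⟩ => by simp [Subsingleton.elim x 0] at hx⟩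
  exact Real.iSup_of_isEmpty _

theorem ContinuousOn.map_numRad_le [Nontrivial H] {φ : ℝ → ℝ} (hφ : ContinuousOn φ (Ici 0))
    {T : H →L[ℂ] H} {C : ℝ} (h : ∀ x : H, ‖x‖ = 1 → φ ‖⟪T x, x⟫_ℂ‖ ≤ C) :
    φ (numRad T) ≤ C := by
  have : Nonempty {x : H // ‖x‖ = 1} := by
    obtain ⟨x, hx⟩ := exists_norm_eq H zero_le_one
    exact ⟨⟨x, hx⟩⟩
  have hclosed : IsClosed (Ici 0 ∩ φ ⁻¹' Iic C) :=
    hφ.preimage_isClosed_of_isClosed isClosed_Ici isClosed_Iic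
  have hrange : (range fun x : {x : H // ‖x‖ = 1} => ‖⟪T x, x⟫_ℂ‖) ⊆ Ici 0 ∩ φ ⁻¹' Iic C := by
    rintro _ ⟨⟨x, hx⟩, rfl⟩
    exact ⟨norm_nonneg _, h x hx⟩
  exact (closure_minimal hrange hclosed (csSup_mem_closure (range_nonempty _)
    (numRad_bddAbove T))).2

theorem re_inner_le_re_inner_of_le {S T : H →L[ℂ] H} (h : S ≤ T) (x : H) :
    RCLike.re ⟪S x, x⟫_ℂ ≤ RCLike.re ⟪T x, x⟫_ℂ := by
  have := ((le_def S T).mp h).re_inner_nonneg_left x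
  rwa [sub_apply, inner_sub_left, map_sub, sub_nonneg] at this

end

section

variable {H : Type*} [NormedAddCommGroup H] [InnerProductSpace ℂ H] [CompleteSpace H]

theorem ConvexOn.map_re_inner_le_re_inner_cfc {φ : ℝ → ℝ} (hconv : ConvexOn ℝ (Ici 0) φ)
    (hcont : ContinuousOn φ (Ici 0)) (hmono : MonotoneOn φ (Ici 0)) {T : H →L[ℂ] H}
    (hT : 0 ≤ T) {x : H} (hx : ‖x‖ = 1) :
    φ (RCLike.re ⟪T x, x⟫_ℂ) ≤ RCLike.re ⟪cfc φ T x, x⟫_ℂ := by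
  set t := RCLike.re ⟪T x, x⟫_ℂ
  have hspec : spectrum ℝ T ⊆ Ici 0 := fun _ hs => spectrum_nonneg_of_nonneg hT hs
  obtain ⟨a, ha⟩ := hconv.exists_forall_add_mul_sub_le_of_monotoneOn hmono
    (((nonneg_iff_isPositive T).mp hT).re_inner_nonneg_left x)
  have hline : cfc (fun s => φ t + a * (s - t)) T ≤ cfc φ T :=
    cfc_mono (fun s hs => ha s (hspec hs)) (hf := by fun_prop) (hg := hcont.mono hspec)
  have hcfc : cfc (fun s => φ t + a * (s - t)) T
      = algebraMap ℝ _ (φ t) + a • (T - algebraMap ℝ _ t) := by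
    rw [cfc_add .., cfc_const_mul .., cfc_sub .., cfc_id' .., cfc_const .., cfc_const ..]
  calc φ t = RCLike.re ⟪(algebraMap ℝ (H →L[ℂ] H) (φ t) + a • (T - algebraMap ℝ _ t)) x, x⟫_ℂ :=
        by simp [Algebra.algebraMap_eq_smul_one, hx, t]
    _ ≤ RCLike.re ⟪cfc φ T x, x⟫_ℂ := hcfc ▸ re_inner_le_re_inner_of_le hline x

theorem re_inner_smul_adjoint_mul_self_apply (c : ℝ) (A : H →L[ℂ] H) (x : H) :
    RCLike.re ⟪(c • (adjoint A * A)) x, x⟫_ℂ = c * ‖A x‖ ^ 2 := by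
  rw [smul_apply, mul_apply_eq_comp, RCLike.real_smul_eq_coe_smul (K := ℂ), inner_smul_left,
    adjoint_inner_left, inner_self_eq_norm_sq_to_K, RCLike.conj_ofReal, ← RCLike.ofReal_pow,
    ← RCLike.ofReal_mul, RCLike.ofReal_re]

theorem norm_inner_adjoint_mul_mul_apply_le (A X B : H →L[ℂ] H) (x : H) :
    ‖⟪(adjoint A * X * B) x, x⟫_ℂ‖ ≤ (1 / 2) * (‖X‖ * ‖A x‖ ^ 2 + ‖X‖ * ‖B x‖ ^ 2) := by
  rw [mul_apply_eq_comp, mul_apply_eq_comp, adjoint_inner_left]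
  calc ‖⟪X (B x), A x⟫_ℂ‖ ≤ ‖X (B x)‖ * ‖A x‖ := norm_inner_le_norm _ _
    _ ≤ ‖X‖ * ‖B x‖ * ‖A x‖ := by gcongr; exact X.le_opNorm _
    _ ≤ (1 / 2) * (‖X‖ * ‖A x‖ ^ 2 + ‖X‖ * ‖B x‖ ^ 2) := by
      nlinarith [mul_nonneg (norm_nonneg X) (sq_nonneg (‖A x‖ - ‖B x‖))]

theorem ConvexOn.map_norm_inner_adjoint_mul_mul_apply_le {φ : ℝ → ℝ}
    (hconv : ConvexOn ℝ (Ici 0) φ) (hcont : ContinuousOn φ (Ici 0))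
    (hmono : MonotoneOn φ (Ici 0)) (A X B : H →L[ℂ] H) {x : H} (hx : ‖x‖ = 1) :
    φ ‖⟪(adjoint A * X * B) x, x⟫_ℂ‖ ≤ (1 / 2) *
      RCLike.re ⟪(cfc φ (‖X‖ • (adjoint A * A)) + cfc φ (‖X‖ • (adjoint B * B))) x, x⟫_ℂ := by
  set S₁ := ‖X‖ • (adjoint A * A)
  set S₂ := ‖X‖ • (adjoint B * B)
  have hS₁ : 0 ≤ S₁ := smul_nonneg (norm_nonneg X) (star_mul_self_nonneg A)
  have hS₂ : 0 ≤ S₂ := smul_nonneg (norm_nonneg X) (star_mul_self_nonneg B)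
  set t₁ := RCLike.re ⟪S₁ x, x⟫_ℂ
  set t₂ := RCLike.re ⟪S₂ x, x⟫_ℂ
  have ht₁ : 0 ≤ t₁ := ((nonneg_iff_isPositive _).mp hS₁).re_inner_nonneg_left x
  have ht₂ : 0 ≤ t₂ := ((nonneg_iff_isPositive _).mp hS₂).re_inner_nonneg_left x
  have hmid : ‖⟪(adjoint A * X * B) x, x⟫_ℂ‖ ≤ (1 / 2 : ℝ) • t₁ + (1 / 2 : ℝ) • t₂ := by
    simpa only [t₁, t₂, S₁, S₂, re_inner_smul_adjoint_mul_self_apply, smul_eq_mul, ← mul_add]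
      using norm_inner_adjoint_mul_mul_apply_le A X B x
  calc φ ‖⟪(adjoint A * X * B) x, x⟫_ℂ‖ ≤ φ ((1 / 2 : ℝ) • t₁ + (1 / 2 : ℝ) • t₂) :=
        hmono (norm_nonneg _) ((norm_nonneg _).trans hmid) hmid
    _ ≤ (1 / 2 : ℝ) • φ t₁ + (1 / 2 : ℝ) • φ t₂ :=
        hconv.2 ht₁ ht₂ (by norm_num) (by norm_num) (by norm_num)
    _ ≤ (1 / 2) * (RCLike.re ⟪cfc φ S₁ x, x⟫_ℂ + RCLike.re ⟪cfc φ S₂ x, x⟫_ℂ) := by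
        simp only [smul_eq_mul, ← mul_add]
        gcongr
        · exact hconv.map_re_inner_le_re_inner_cfc hcont hmono hS₁ hx
        · exact hconv.map_re_inner_le_re_inner_cfc hcont hmono hS₂ hx
    _ = (1 / 2) * RCLike.re ⟪(cfc φ S₁ + cfc φ S₂) x, x⟫_ℂ := by
        rw [add_apply, inner_add_left, map_add]

end

variable {H : Type*} [NormedAddCommGroup H] [InnerProductSpace ℂ H] [CompleteSpace H]

theorem stmt15 (A B X : H →L[ℂ] H) (φ : ℝ → ℝ) (hφ : IsOrliczFunction φ) :
    φ (numRad (ContinuousLinearMap.adjoint A * X * B)) ≤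
      (1 / 2) * numRad (cfc φ (‖X‖ • (ContinuousLinearMap.adjoint A * A)) +
        cfc φ (‖X‖ • (ContinuousLinearMap.adjoint B * B))) := by
  obtain ⟨hconv, hcont, hmono, hzero, -, -⟩ := hφ
  rcases subsingleton_or_nontrivial H with _ | _
  · simp [numRad_of_subsingleton, hzero]
  refine hcont.map_numRad_le fun x hx => ?_
  refine (hconv.map_norm_inner_adjoint_mul_mul_apply_le hcont hmono A X B hx).trans ?_
  gcongr
  exact (RCLike.re_le_norm _).trans (norm_inner_le_numRad _ hx)
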